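/- arXiv:2105.02014 — 2 statements merged into one kernel-verified Lean document; each statement's English description precedes it below -/
import Mathlib

section
/- Let A, B, C ∈ ℝ² be affinely independent, let O be the circumcenter of triangle ABC, let I be its incenter, and let I_A, I_B, I_C be its three excenters. Then O = (I + I_A + I_B + I_C)/4; that is, the circumcenter of a triangle is the centroid of the centers of the inscribed circle and the three escribed circles. -/
open Metric in
lemma mem_line_iff' {E : Type*} [NormedAddCommGroup E] [InnerProductSpace ℝ E]
    (X Y P : E) : P ∈ (line[ℝ, X, Y] : AffineSubspace ℝ E) ↔ ∃ r : ℝ, P = X + r • (Y - X) := by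
  constructor
  · intro h
    have : P - X + X ∈ (line[ℝ, X, Y] : AffineSubspace ℝ E) := by simpa using h
    rw [show P - X + X = (P - X) +ᵥ X by simp [vadd_eq_add]] at this
    rw [vadd_left_mem_affineSpan_pair] at this
    obtain ⟨r, hr⟩ := this
    exact ⟨r, by rw [vsub_eq_sub] at hr; rw [hr]; abel⟩
  · rintro ⟨r, rfl⟩
    have := (vadd_left_mem_affineSpan_pair (k := ℝ) (p₁ := X) (p₂ := Y)
      (v := r • (Y - X))).2 ⟨r, by simp [vsub_eq_sub]⟩
    simpa [vadd_eq_add, add_comm] using this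

open Metric RealInnerProductSpace in
lemma infDist_line_aux {E : Type*} [NormedAddCommGroup E] [InnerProductSpace ℝ E]
    (X Y P w : E) (α s : ℝ) (hw : ⟪Y - X, w⟫ = 0)
    (hP : P = X + α • w + s • (Y - X)) :
    Metric.infDist P (line[ℝ, X, Y] : Set E) = |α| * ‖w‖ := by
  have hne : (line[ℝ, X, Y] : Set E).Nonempty :=
    ⟨X, left_mem_affineSpan_pair ℝ X Y⟩
  apply le_antisymm
  · have hq : X + s • (Y - X) ∈ (line[ℝ, X, Y] : Set E) := (mem_line_iff' X Y _).2 ⟨s, rfl⟩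
    calc infDist P (line[ℝ, X, Y] : Set E) ≤ dist P (X + s • (Y - X)) :=
          infDist_le_dist_of_mem hq
      _ = |α| * ‖w‖ := by
          rw [dist_eq_norm, hP]
          rw [show X + α • w + s • (Y - X) - (X + s • (Y - X)) = α • w by abel]
          rw [norm_smul]; simp [Real.norm_eq_abs]
  · rcases eq_or_ne w 0 with h0 | h0
    · simp [h0, infDist_nonneg]
    apply le_of_not_gt
    rw [infDist_lt_iff hne]
    rintro ⟨q, hq, hlt⟩
    obtain ⟨r, rfl⟩ := (mem_line_iff' X Y q).1 hq
    have hd : dist P (X + r • (Y - X)) = ‖α • w + (s - r) • (Y - X)‖ := by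
      rw [dist_eq_norm, hP]; congr 1
      rw [sub_smul]; abel
    have hwpos : (0:ℝ) < ‖w‖ := norm_pos_iff.2 h0
    have hinner : ⟪α • w + (s - r) • (Y - X), w⟫ = α * ‖w‖^2 := by
      rw [inner_add_left, real_inner_smul_left, real_inner_smul_left, hw,
        real_inner_self_eq_norm_sq]
      ring
    have hge : |α| * ‖w‖ * ‖w‖ ≤ ‖α • w + (s - r) • (Y - X)‖ * ‖w‖ := by
      calc |α| * ‖w‖ * ‖w‖ = |⟪α • w + (s - r) • (Y - X), w⟫| := by
            rw [hinner, abs_mul, abs_of_nonneg (by positivity : (0:ℝ) ≤ ‖w‖^2)]; ring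
        _ ≤ ‖α • w + (s - r) • (Y - X)‖ * ‖w‖ := abs_real_inner_le_norm _ _
    have := (mul_le_mul_iff_of_pos_right hwpos).1 hge
    rw [hd] at hlt
    linarith

open RealInnerProductSpace in
lemma soppside_neg {E : Type*} [NormedAddCommGroup E] [InnerProductSpace ℝ E]
    (X Y P Q w : E) (α β s t : ℝ)
    (hw : ⟪Y - X, w⟫ = 0) (h0 : w ≠ 0)
    (hP : P = X + α • w + s • (Y - X)) (hQ : Q = X + β • w + t • (Y - X))
    (hβ : 0 < β)
    (h : (line[ℝ, X, Y] : AffineSubspace ℝ E).SOppSide P Q) : α < 0 := by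
  obtain ⟨⟨p₁, hp₁, p₂, hp₂, hray⟩, hPn, _⟩ := h
  obtain ⟨r₁, rfl⟩ := (mem_line_iff' X Y p₁).1 hp₁
  obtain ⟨r₂, rfl⟩ := (mem_line_iff' X Y p₂).1 hp₂
  have hwsq : (0:ℝ) < ‖w‖^2 := by
    have := norm_pos_iff.2 h0
    positivity
  have hx : P -ᵥ (X + r₁ • (Y - X)) = α • w + (s - r₁) • (Y - X) := by
    rw [vsub_eq_sub, hP, sub_smul]; abel
  have hy : (X + r₂ • (Y - X)) -ᵥ Q = (-β) • w + (r₂ - t) • (Y - X) := by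
    rw [vsub_eq_sub, hQ, sub_smul, neg_smul]; abel
  have hix : ⟪P -ᵥ (X + r₁ • (Y - X)), w⟫ = α * ‖w‖^2 := by
    rw [hx, inner_add_left, real_inner_smul_left, real_inner_smul_left, hw,
      real_inner_self_eq_norm_sq]; ring
  have hiy : ⟪(X + r₂ • (Y - X)) -ᵥ Q, w⟫ = -β * ‖w‖^2 := by
    rw [hy, inner_add_left, real_inner_smul_left, real_inner_smul_left, hw,
      real_inner_self_eq_norm_sq]; ring
  rcases hray with h1 | h1 | ⟨c₁, c₂, hc₁, hc₂, heq⟩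
  · exfalso
    apply hPn
    have h1' : P - (X + r₁ • (Y - X)) = 0 := by rw [← vsub_eq_sub]; exact h1
    have : P = X + r₁ • (Y - X) := sub_eq_zero.1 h1'
    rw [this]; exact (mem_line_iff' X Y _).2 ⟨r₁, rfl⟩
  · exfalso
    have : (-β) * ‖w‖^2 = 0 := by rw [← hiy, h1, inner_zero_left]
    nlinarith
  · have := congrArg (fun z => ⟪z, w⟫) heq
    simp only [real_inner_smul_left] at this
    rw [hix, hiy] at this
    nlinarith [mul_pos hc₂ (mul_pos hβ hwsq), mul_pos hc₁ hwsq]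
open RealInnerProductSpace in
lemma norm_w_sq {E : Type*} [NormedAddCommGroup E] [InnerProductSpace ℝ E] (d z : E) :
    ‖⟪d,d⟫ • z - ⟪z,d⟫ • d‖^2 = ⟪d,d⟫ * (⟪d,d⟫ * ⟪z,z⟫ - ⟪z,d⟫^2) := by
  rw [← real_inner_self_eq_norm_sq]
  simp only [inner_sub_left, inner_sub_right, real_inner_smul_left, real_inner_smul_right]
  rw [real_inner_comm z d]
  ring


open RealInnerProductSpace in
lemma w_orth {E : Type*} [NormedAddCommGroup E] [InnerProductSpace ℝ E] (X Y Z : E) :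
    ⟪Y - X, ⟪Y-X,Y-X⟫ • (Z-X) - ⟪Z-X,Y-X⟫ • (Y-X)⟫ = 0 := by
  rw [inner_sub_right, real_inner_smul_right, real_inner_smul_right,
    real_inner_comm (Z-X) (Y-X)]
  ring

open RealInnerProductSpace in
lemma infDist_line_formula {E : Type*} [NormedAddCommGroup E] [InnerProductSpace ℝ E]
    (X Y Z P : E) (r : ℝ)
    (hP : ∃ t : ℝ, P = X + r • (⟪Y-X,Y-X⟫ • (Z-X) - ⟪Z-X,Y-X⟫ • (Y-X)) + t • (Y - X)) :
    Metric.infDist P (line[ℝ, X, Y] : Set E)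
      = |r| * Real.sqrt (⟪Y-X,Y-X⟫ * (⟪Y-X,Y-X⟫ * ⟪Z-X,Z-X⟫ - ⟪Z-X,Y-X⟫^2)) := by
  obtain ⟨t, hP⟩ := hP
  rw [infDist_line_aux X Y P _ r t (w_orth X Y Z) hP, ← Real.sqrt_sq (norm_nonneg _), norm_w_sq]

open RealInnerProductSpace in
lemma soppside_coeff_neg {E : Type*} [NormedAddCommGroup E] [InnerProductSpace ℝ E]
    (X Y Z P Q : E) (r r' : ℝ)
    (hw0 : (⟪Y-X,Y-X⟫ • (Z-X) - ⟪Z-X,Y-X⟫ • (Y-X)) ≠ 0)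
    (hP : ∃ t : ℝ, P = X + r • (⟪Y-X,Y-X⟫ • (Z-X) - ⟪Z-X,Y-X⟫ • (Y-X)) + t • (Y - X))
    (hQ : ∃ t : ℝ, Q = X + r' • (⟪Y-X,Y-X⟫ • (Z-X) - ⟪Z-X,Y-X⟫ • (Y-X)) + t • (Y - X))
    (hr' : 0 < r')
    (h : (line[ℝ, X, Y] : AffineSubspace ℝ E).SOppSide P Q) : r < 0 := by
  obtain ⟨t, hP⟩ := hP
  obtain ⟨t', hQ⟩ := hQ
  exact soppside_neg X Y P Q _ r r' t t' (w_orth X Y Z) hw0 hP hQ hr' h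

lemma bary_pos_solve (a b c α β γ : ℝ) (ha : 0 < a) (hb : 0 < b) (hc : 0 < c)
    (hα : 0 < α) (hβ : 0 < β) (hγ : 0 < γ) (hsum : α + β + γ = 1)
    (h1 : |α| * (b*c) = |β| * (a*c)) (h2 : |β| * (a*c) = |γ| * (a*b)) :
    β = b/(a+b+c) ∧ γ = c/(a+b+c) := by
  rw [abs_of_pos hα, abs_of_pos hβ] at h1
  rw [abs_of_pos hβ, abs_of_pos hγ] at h2
  have h3 : α * (b*c) = γ * (a*b) := h1.trans h2
  have e1 : α * b = β * a := by
    have h : (α * b) * c = (β * a) * c := by linear_combination h1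
    exact mul_right_cancel₀ hc.ne' h
  have e2 : β * c = γ * b := by
    have h : a * (β * c) = a * (γ * b) := by linear_combination h2
    exact mul_left_cancel₀ ha.ne' h
  have e3 : α * c = γ * a := by
    have h : (α * c) * b = (γ * a) * b := by linear_combination h3
    exact mul_right_cancel₀ hb.ne' h
  have hs : (0:ℝ) < a + b + c := by linarith
  constructor
  · have h : β * (a+b+c) = b := by linear_combination (-1 : ℝ) * e1 + e2 + b * hsum
    field_simp
    linarith [h]
  · have h : γ * (a+b+c) = c := by linear_combination (-1:ℝ) * e3 + (-1:ℝ) * e2 + c * hsum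
    field_simp
    linarith [h]

lemma bary_neg_solve (a b c α β γ : ℝ) (ha : 0 < a) (hb : 0 < b) (hc : 0 < c)
    (t1 : a < b + c) (t2 : b < a + c) (t3 : c < a + b)
    (hsum : α + β + γ = 1)
    (h1 : |α| * (b*c) = |β| * (a*c)) (h2 : |β| * (a*c) = |γ| * (a*b))
    (hα : α < 0) :
    α = -(a/(b+c-a)) ∧ β = b/(b+c-a) ∧ γ = c/(b+c-a) := by
  have h3 : |α| * (b*c) = |γ| * (a*b) := h1.trans h2
  rw [abs_of_neg hα] at h1 h3
  have hβ0 : β ≠ 0 := by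
    intro h
    rw [h, abs_zero, zero_mul] at h1
    nlinarith [mul_pos hb hc]
  have hγ0 : γ ≠ 0 := by
    intro h
    rw [h, abs_zero, zero_mul] at h3
    nlinarith [mul_pos hb hc]
  have hs : (0:ℝ) < b + c - a := by linarith
  rcases hβ0.lt_or_gt with hβ | hβ
  · exfalso
    rw [abs_of_neg hβ] at h1 h2
    rcases hγ0.lt_or_gt with hγ | hγ
    · linarith
    · rw [abs_of_pos hγ] at h2
      have e1 : α * b = β * a := by
        have h : (α * b) * c = (β * a) * c := by linear_combination (-1:ℝ) * h1
        exact mul_right_cancel₀ hc.ne' h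
      have e2 : -(β * c) = γ * b := by
        have h : a * (-(β * c)) = a * (γ * b) := by linear_combination h2
        exact mul_left_cancel₀ ha.ne' h
      have h : β * (a + b - c) = b := by linear_combination (-1:ℝ)*e1 + e2 + b*hsum
      nlinarith
  · rw [abs_of_pos hβ] at h1 h2
    have e1 : α * b = -(β * a) := by
      have h : (α * b) * c = (-(β * a)) * c := by linear_combination (-1:ℝ)*h1
      exact mul_right_cancel₀ hc.ne' h
    rcases hγ0.lt_or_gt with hγ | hγ
    · exfalso
      rw [abs_of_neg hγ] at h2
      have e2 : β * c = -(γ * b) := by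
        have h : a * (β * c) = a * (-(γ * b)) := by linear_combination h2
        exact mul_left_cancel₀ ha.ne' h
      have h : β * (b - a - c) = b := by linear_combination (-1:ℝ)*e1 + (-1:ℝ)*e2 + b*hsum
      nlinarith
    · rw [abs_of_pos hγ] at h2
      rw [abs_of_pos hγ] at h3
      have e2 : β * c = γ * b := by
        have h : a * (β * c) = a * (γ * b) := by linear_combination h2
        exact mul_left_cancel₀ ha.ne' h
      have e3 : α * c = -(γ * a) := by
        have h : (α * c) * b = (-(γ * a)) * b := by linear_combination (-1:ℝ)*h3
        exact mul_right_cancel₀ hb.ne' h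
      have hβv : β * (b+c-a) = b := by linear_combination b*hsum + e2 + (-1:ℝ)*e1
      have hγv : γ * (b+c-a) = c := by linear_combination c*hsum + (-1:ℝ)*e2 + (-1:ℝ)*e3
      refine ⟨?_, ?_, ?_⟩
      · have h : α * (b+c-a) = -a := by linear_combination e1 + e3 + (-1:ℝ)*a*hsum
        field_simp
        linarith [h]
      · field_simp; linarith [hβv]
      · field_simp; linarith [hγv]

open RealInnerProductSpace in
lemma decomp_line {E : Type*} [NormedAddCommGroup E] [InnerProductSpace ℝ E]
    (A B C P : E) (p q : ℝ) (hdd : ⟪C-B, C-B⟫ ≠ 0)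
    (hP : P = A + p • (B-A) + q • (C-A)) :
    ∃ t : ℝ, P = B + ((1-p-q)/⟪C-B,C-B⟫) • (⟪C-B,C-B⟫ • (A-B) - ⟪A-B,C-B⟫ • (C-B))
      + t • (C - B) := by
  refine ⟨q + ((1-p-q) * ⟪A-B,C-B⟫)/⟪C-B,C-B⟫, ?_⟩
  rw [hP]
  match_scalars <;> field_simp <;> ring

set_option maxHeartbeats 2000000
open RealInnerProductSpace


/-- The circumcenter of a triangle is the centroid of the incenter and the three excenters:
`O = (I + I_A + I_B + I_C)/4`. -/
theorem circumcenter_eq_centroid_of_incenter_excenters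
    (A B C O I IA IB IC : EuclideanSpace ℝ (Fin 2))
    (hABC : AffineIndependent ℝ ![A, B, C])
    -- `O` is the circumcenter: equidistant from the three vertices
    (hO1 : dist O A = dist O B) (hO2 : dist O B = dist O C)
    -- `I` is the incenter: an interior point equidistant from the three side lines
    (hIint : ∃ α β γ : ℝ, 0 < α ∧ 0 < β ∧ 0 < γ ∧ α + β + γ = 1 ∧ I = α • A + β • B + γ • C)
    (hI1 : Metric.infDist I (line[ℝ, B, C] : Set (EuclideanSpace ℝ (Fin 2))) =
           Metric.infDist I (line[ℝ, C, A] : Set (EuclideanSpace ℝ (Fin 2))))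
    (hI2 : Metric.infDist I (line[ℝ, C, A] : Set (EuclideanSpace ℝ (Fin 2))) =
           Metric.infDist I (line[ℝ, A, B] : Set (EuclideanSpace ℝ (Fin 2))))
    -- `IA` is the excenter opposite `A`: on the other side of `BC` from `A` and
    -- equidistant from the three side lines, etc.
    (hIA0 : (line[ℝ, B, C]).SOppSide IA A)
    (hIA1 : Metric.infDist IA (line[ℝ, B, C] : Set (EuclideanSpace ℝ (Fin 2))) =
            Metric.infDist IA (line[ℝ, C, A] : Set (EuclideanSpace ℝ (Fin 2))))
    (hIA2 : Metric.infDist IA (line[ℝ, C, A] : Set (EuclideanSpace ℝ (Fin 2))) =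
            Metric.infDist IA (line[ℝ, A, B] : Set (EuclideanSpace ℝ (Fin 2))))
    (hIB0 : (line[ℝ, C, A]).SOppSide IB B)
    (hIB1 : Metric.infDist IB (line[ℝ, B, C] : Set (EuclideanSpace ℝ (Fin 2))) =
            Metric.infDist IB (line[ℝ, C, A] : Set (EuclideanSpace ℝ (Fin 2))))
    (hIB2 : Metric.infDist IB (line[ℝ, C, A] : Set (EuclideanSpace ℝ (Fin 2))) =
            Metric.infDist IB (line[ℝ, A, B] : Set (EuclideanSpace ℝ (Fin 2))))
    (hIC0 : (line[ℝ, A, B]).SOppSide IC C)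
    (hIC1 : Metric.infDist IC (line[ℝ, B, C] : Set (EuclideanSpace ℝ (Fin 2))) =
            Metric.infDist IC (line[ℝ, C, A] : Set (EuclideanSpace ℝ (Fin 2))))
    (hIC2 : Metric.infDist IC (line[ℝ, C, A] : Set (EuclideanSpace ℝ (Fin 2))) =
            Metric.infDist IC (line[ℝ, A, B] : Set (EuclideanSpace ℝ (Fin 2)))) :
    O = (4⁻¹ : ℝ) • (I + IA + IB + IC) := by
  -- linear independence of the edge vectors
  have hli : ∀ p q : ℝ, p • (B - A) + q • (C - A) = 0 → p = 0 ∧ q = 0 := by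
    intro p q hpq
    by_contra hcon
    rw [affineIndependent_iff_not_collinear_set] at hABC
    apply hABC
    rcases eq_or_ne p 0 with hp | hp
    · have hq : q ≠ 0 := by tauto
      have hv : C - A = 0 := by
        have : q • (C - A) = 0 := by rw [hp, zero_smul, zero_add] at hpq; exact hpq
        exact (smul_eq_zero.1 this).resolve_left hq
      have hCA : C = A := by rwa [sub_eq_zero] at hv
      rw [collinear_iff_of_mem (Set.mem_insert A {B, C})]
      refine ⟨B - A, ?_⟩
      rintro P hP
      rcases hP with rfl | rfl | rfl
      · exact ⟨0, by simp⟩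
      · exact ⟨1, by simp⟩
      · exact ⟨0, by simp [hCA]⟩
    · rw [collinear_iff_of_mem (Set.mem_insert A {B, C})]
      refine ⟨C - A, ?_⟩
      rintro P hP
      have hB : B = (-q/p) • (C - A) +ᵥ A := by
        have h2 : p • (B - A) = -(q • (C - A)) := eq_neg_of_add_eq_zero_left hpq
        have h1 : B - A = (-q/p) • (C - A) := by
          calc B - A = p⁻¹ • (p • (B - A)) := (inv_smul_smul₀ hp _).symm
            _ = p⁻¹ • ((-q) • (C - A)) := by rw [h2, neg_smul]
            _ = (-q/p) • (C - A) := by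
                rw [smul_smul]
                congr 1
                field_simp
        have : B = (-q/p) • (C - A) + A := by rw [← h1]; abel
        simpa [vadd_eq_add] using this
      rcases hP with rfl | rfl | rfl
      · exact ⟨0, by simp⟩
      · exact ⟨-q/p, hB⟩
      · exact ⟨1, by simp⟩
  -- nondegeneracy
  have hcpos : (0:ℝ) < ‖B - A‖ := by
    rw [norm_pos_iff]
    intro h
    exact one_ne_zero (hli 1 0 (by simp [h])).1
  have hbpos : (0:ℝ) < ‖C - A‖ := by
    rw [norm_pos_iff]
    intro h
    exact one_ne_zero (hli 0 1 (by simp [h])).2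
  have hapos : (0:ℝ) < ‖C - B‖ := by
    rw [norm_pos_iff]
    intro h
    have h' : (-1 : ℝ) • (B - A) + (1:ℝ) • (C - A) = 0 := by
      rw [show (-1:ℝ) • (B - A) + (1:ℝ) • (C - A) = C - B from by module, h]
    exact one_ne_zero (hli (-1) 1 h').2
  have hcomm : ⟪B-A, C-A⟫ = ⟪C-A, B-A⟫ := real_inner_comm _ _
  have huu : ⟪B-A, B-A⟫ = ‖B-A‖^2 := real_inner_self_eq_norm_sq _
  have hvv : ⟪C-A, C-A⟫ = ‖C-A‖^2 := real_inner_self_eq_norm_sq _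
  have hvvpos : 0 < ⟪C-A, C-A⟫ := by rw [hvv]; positivity
  -- positivity of the Gram determinant
  have hwne0 : ⟪C-A,C-A⟫ • (B-A) - ⟪B-A,C-A⟫ • (C-A) ≠ 0 := by
    intro h
    have h' : ⟪C-A,C-A⟫ • (B - A) + (-⟪B-A,C-A⟫) • (C - A) = 0 := by
      rw [neg_smul, ← sub_eq_add_neg]; exact h
    have := (hli _ _ h').1
    exact hvvpos.ne' this
  have hD2pos : 0 < ⟪B-A,B-A⟫ * ⟪C-A,C-A⟫ - ⟪C-A,B-A⟫^2 := by
    have hw := norm_w_sq (C-A) (B-A)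
    rw [hcomm] at hw
    have hwpos : 0 < ‖⟪C-A,C-A⟫ • (B-A) - ⟪C-A,B-A⟫ • (C-A)‖^2 := by
      rw [← hcomm]
      exact pow_pos (norm_pos_iff.2 hwne0) 2
    nlinarith [hvvpos, hw, hwpos]
  set a : ℝ := ‖C - B‖ with ha_def
  set b : ℝ := ‖C - A‖ with hb_def
  set c : ℝ := ‖B - A‖ with hc_def
  set D2 : ℝ := ⟪B-A,B-A⟫ * ⟪C-A,C-A⟫ - ⟪C-A,B-A⟫^2 with hD2_def
  set D : ℝ := Real.sqrt D2 with hD_def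
  have hDpos : 0 < D := Real.sqrt_pos.2 hD2pos
  have hddBC : ⟪C-B, C-B⟫ = a^2 := real_inner_self_eq_norm_sq _
  have hddCA : ⟪A-C, A-C⟫ = b^2 := by
    rw [show (A:EuclideanSpace ℝ (Fin 2)) - C = -(C - A) from by abel, inner_neg_neg]
    exact hvv
  have hddAB : ⟪B-A, B-A⟫ = c^2 := huu
  have hgramBC : ⟪C-B,C-B⟫ * ⟪A-B,A-B⟫ - ⟪A-B,C-B⟫^2 = D2 := by
    rw [hD2_def,
      show (C:EuclideanSpace ℝ (Fin 2)) - B = (C-A) - (B-A) from by abel,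
      show (A:EuclideanSpace ℝ (Fin 2)) - B = -(B-A) from by abel]
    simp only [inner_sub_left, inner_sub_right, inner_neg_left, inner_neg_right, inner_neg_neg]
    simp only [real_inner_comm C A, real_inner_comm B A, real_inner_comm C B]
    ring
  have hgramCA : ⟪A-C,A-C⟫ * ⟪B-C,B-C⟫ - ⟪B-C,A-C⟫^2 = D2 := by
    rw [hD2_def,
      show (A:EuclideanSpace ℝ (Fin 2)) - C = -(C-A) from by abel,
      show (B:EuclideanSpace ℝ (Fin 2)) - C = (B-A) - (C-A) from by abel]
    simp only [inner_sub_left, inner_sub_right, inner_neg_left, inner_neg_right, inner_neg_neg]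
    simp only [real_inner_comm C A, real_inner_comm B A, real_inner_comm C B]
    ring
  have hgramAB : ⟪B-A,B-A⟫ * ⟪C-A,C-A⟫ - ⟪C-A,B-A⟫^2 = D2 := by rw [hD2_def]
  have hddBCne : ⟪C-B, C-B⟫ ≠ 0 := by rw [hddBC]; positivity
  have hddCAne : ⟪A-C, A-C⟫ ≠ 0 := by rw [hddCA]; positivity
  have hddABne : ⟪B-A, B-A⟫ ≠ 0 := by rw [hddAB]; positivity
  -- decompositions with respect to the three lines
  have decBC : ∀ (P : EuclideanSpace ℝ (Fin 2)) (p q : ℝ), P = A + p • (B-A) + q • (C-A) →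
      ∃ t : ℝ, P = B + ((1-p-q)/⟪C-B,C-B⟫) • (⟪C-B,C-B⟫ • (A-B) - ⟪A-B,C-B⟫ • (C-B))
        + t • (C - B) := fun P p q hP => decomp_line A B C P p q hddBCne hP
  have decCA : ∀ (P : EuclideanSpace ℝ (Fin 2)) (p q : ℝ), P = A + p • (B-A) + q • (C-A) →
      ∃ t : ℝ, P = C + (p/⟪A-C,A-C⟫) • (⟪A-C,A-C⟫ • (B-C) - ⟪B-C,A-C⟫ • (A-C))
        + t • (A - C) := by
    intro P p q hP
    have h' : P = B + q • (C-B) + (1-p-q) • (A-B) := by rw [hP]; module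
    have hres := decomp_line B C A P q (1-p-q) hddCAne h'
    rw [show 1 - q - (1-p-q) = p from by ring] at hres
    exact hres
  have decAB : ∀ (P : EuclideanSpace ℝ (Fin 2)) (p q : ℝ), P = A + p • (B-A) + q • (C-A) →
      ∃ t : ℝ, P = A + (q/⟪B-A,B-A⟫) • (⟪B-A,B-A⟫ • (C-A) - ⟪C-A,B-A⟫ • (B-A))
        + t • (B - A) := by
    intro P p q hP
    have h' : P = C + (1-p-q) • (A-C) + p • (B-C) := by rw [hP]; module
    have hres := decomp_line C A B P (1-p-q) p hddABne h'
    rw [show 1 - (1-p-q) - p = q from by ring] at hres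
    exact hres
  -- distance formulas
  have keyBC : ∀ (P : EuclideanSpace ℝ (Fin 2)) (p q : ℝ), P = A + p • (B-A) + q • (C-A) →
      Metric.infDist P (line[ℝ, B, C] : Set (EuclideanSpace ℝ (Fin 2))) * a = |1-p-q| * D := by
    intro P p q hP
    rw [infDist_line_formula B C A P _ (decBC P p q hP), hgramBC, hddBC,
      Real.sqrt_mul (by positivity : (0:ℝ) ≤ a^2) D2, Real.sqrt_sq hapos.le,
      abs_div, abs_of_pos (by positivity : (0:ℝ) < a^2), ← hD_def]
    field_simp
  have keyCA : ∀ (P : EuclideanSpace ℝ (Fin 2)) (p q : ℝ), P = A + p • (B-A) + q • (C-A) →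
      Metric.infDist P (line[ℝ, C, A] : Set (EuclideanSpace ℝ (Fin 2))) * b = |p| * D := by
    intro P p q hP
    rw [infDist_line_formula C A B P _ (decCA P p q hP), hgramCA, hddCA,
      Real.sqrt_mul (by positivity : (0:ℝ) ≤ b^2) D2, Real.sqrt_sq hbpos.le,
      abs_div, abs_of_pos (by positivity : (0:ℝ) < b^2), ← hD_def]
    field_simp
  have keyAB : ∀ (P : EuclideanSpace ℝ (Fin 2)) (p q : ℝ), P = A + p • (B-A) + q • (C-A) →
      Metric.infDist P (line[ℝ, A, B] : Set (EuclideanSpace ℝ (Fin 2))) * c = |q| * D := by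
    intro P p q hP
    rw [infDist_line_formula A B C P _ (decAB P p q hP), hgramAB, hddAB,
      Real.sqrt_mul (by positivity : (0:ℝ) ≤ c^2) D2, Real.sqrt_sq hcpos.le,
      abs_div, abs_of_pos (by positivity : (0:ℝ) < c^2), ← hD_def]
    field_simp
  -- strict triangle inequalities
  have hta : a < b + c := by
    have hle : a ≤ b + c := by
      rw [ha_def, hb_def, hc_def, show (C:EuclideanSpace ℝ (Fin 2)) - B = (C - A) - (B - A) from by abel]
      exact norm_sub_le _ _
    rcases hle.lt_or_eq with h | h
    · exact h
    exfalso
    have hsr : SameRay ℝ (C - A) (-(B - A)) := by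
      rw [sameRay_iff_norm_add, show (C-A) + -(B-A) = C - B from by abel, norm_neg,
        ← ha_def, ← hb_def, ← hc_def]
      exact h
    rcases hsr with h1 | h1 | ⟨r₁, r₂, hr₁, hr₂, h1⟩
    · exact hbpos.ne' (by rw [hb_def, h1, norm_zero])
    · rw [neg_eq_zero] at h1
      exact hcpos.ne' (by rw [hc_def, h1, norm_zero])
    · have h' : r₂ • (B - A) + r₁ • (C - A) = 0 := by
        rw [smul_neg] at h1
        rw [h1]; abel
      exact hr₂.ne' (hli r₂ r₁ h').1
  have htb : b < a + c := by
    have hle : b ≤ a + c := by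
      rw [ha_def, hb_def, hc_def, show (C:EuclideanSpace ℝ (Fin 2)) - A = (C - B) + (B - A) from by abel]
      exact norm_add_le _ _
    rcases hle.lt_or_eq with h | h
    · exact h
    exfalso
    have hsr : SameRay ℝ (C - B) (B - A) := by
      rw [sameRay_iff_norm_add, show (C-B) + (B-A) = C - A from by abel,
        ← ha_def, ← hb_def, ← hc_def]
      exact h
    rcases hsr with h1 | h1 | ⟨r₁, r₂, hr₁, hr₂, h1⟩
    · exact hapos.ne' (by rw [ha_def, h1, norm_zero])
    · exact hcpos.ne' (by rw [hc_def, h1, norm_zero])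
    · have h' : (-(r₁+r₂)) • (B - A) + r₁ • (C - A) = 0 := by
        rw [show (-(r₁+r₂)) • (B - A) + r₁ • (C - A) = r₁ • (C - B) - r₂ • (B - A) from by module,
          h1, sub_self]
      have := (hli _ _ h').2
      exact hr₁.ne' this
  have htc : c < a + b := by
    have hle : c ≤ a + b := by
      rw [ha_def, hb_def, hc_def, show (B:EuclideanSpace ℝ (Fin 2)) - A = (B - C) + (C - A) from by abel]
      calc ‖(B - C) + (C - A)‖ ≤ ‖B - C‖ + ‖C - A‖ := norm_add_le _ _
        _ = ‖C - B‖ + ‖C - A‖ := by rw [norm_sub_rev]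
    rcases hle.lt_or_eq with h | h
    · exact h
    exfalso
    have hsr : SameRay ℝ (B - C) (C - A) := by
      rw [sameRay_iff_norm_add, show (B-C) + (C-A) = B - A from by abel,
        show ‖(B:EuclideanSpace ℝ (Fin 2)) - C‖ = ‖C - B‖ from norm_sub_rev _ _,
        ← ha_def, ← hb_def, ← hc_def]
      exact h
    rcases hsr with h1 | h1 | ⟨r₁, r₂, hr₁, hr₂, h1⟩
    · exact hapos.ne' (by rw [ha_def, ← norm_neg, show -((C:EuclideanSpace ℝ (Fin 2)) - B) = B - C from by abel, h1, norm_zero])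
    · exact hbpos.ne' (by rw [hb_def, h1, norm_zero])
    · have h' : r₁ • (B - A) + (-(r₁+r₂)) • (C - A) = 0 := by
        rw [show r₁ • (B - A) + (-(r₁+r₂)) • (C - A) = r₁ • (B - C) - r₂ • (C - A) from by module,
          h1, sub_self]
      have := (hli _ _ h').1
      exact hr₁.ne' this
  -- every point decomposes over the affine basis A, B, C
  have hli2 : LinearIndependent ℝ ![B - A, C - A] := LinearIndependent.pair_iff.mpr hli
  obtain ⟨bas, hbas⟩ : ∃ bas : Module.Basis (Fin 2) ℝ (EuclideanSpace ℝ (Fin 2)),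
      ⇑bas = ![B - A, C - A] :=
    ⟨basisOfLinearIndependentOfCardEqFinrank hli2 (by simp),
      coe_basisOfLinearIndependentOfCardEqFinrank _ _⟩
  have hspan : ∀ P : EuclideanSpace ℝ (Fin 2), ∃ p q : ℝ, P = A + p • (B-A) + q • (C-A) := by
    intro P
    refine ⟨bas.repr (P - A) 0, bas.repr (P - A) 1, ?_⟩
    have h := bas.sum_repr (P - A)
    rw [Fin.sum_univ_two, hbas] at h
    simp only [Matrix.cons_val_zero, Matrix.cons_val_one, Matrix.head_cons] at h
    calc P = A + (P - A) := by abel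
      _ = A + ((bas.repr (P-A)) 0 • (B-A) + (bas.repr (P-A)) 1 • (C-A)) := by rw [h]
      _ = A + (bas.repr (P-A)) 0 • (B-A) + (bas.repr (P-A)) 1 • (C-A) := by rw [add_assoc]
  -- incenter
  obtain ⟨α, β, γ, hα, hβ, hγ, hsum, hIdef⟩ := hIint
  have hIdec : I = A + β • (B-A) + γ • (C-A) := by
    rw [hIdef, show α = 1 - β - γ from by linarith]
    module
  have kI1 := keyBC I β γ hIdec
  have kI2 := keyCA I β γ hIdec
  have kI3 := keyAB I β γ hIdec
  have eI1 : |1-β-γ| * b = |β| * a := by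
    apply mul_right_cancel₀ hDpos.ne'
    linear_combination (-b) * kI1 + a * kI2 + (a*b) * hI1
  have eI2 : |β| * c = |γ| * b := by
    apply mul_right_cancel₀ hDpos.ne'
    linear_combination (-c) * kI2 + b * kI3 + (b*c) * hI2
  obtain ⟨hβv, hγv⟩ := bary_pos_solve a b c (1-β-γ) β γ hapos hbpos hcpos
    (by linarith) hβ hγ (by ring)
    (by linear_combination c * eI1) (by linear_combination a * eI2)
  have hI' : I = A + (b/(a+b+c)) • (B-A) + (c/(a+b+c)) • (C-A) := by
    rw [hIdec, hβv, hγv]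
  -- excenter opposite A
  obtain ⟨pA, qA, hdA⟩ := hspan IA
  have hddBCpos : (0:ℝ) < ⟪C-B,C-B⟫ := by rw [hddBC]; positivity
  have hddCApos : (0:ℝ) < ⟪A-C,A-C⟫ := by rw [hddCA]; positivity
  have hddABpos : (0:ℝ) < ⟪B-A,B-A⟫ := by rw [hddAB]; positivity
  have hwBCne : (⟪C-B,C-B⟫ • (A-B) - ⟪A-B,C-B⟫ • (C-B)) ≠ 0 := by
    intro h
    have h2 := norm_w_sq (C-B) (A-B)
    rw [h, norm_zero, hgramBC, hddBC] at h2
    have : (0:ℝ) < a^2 * D2 := by positivity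
    norm_num at h2
    rcases h2 with h2 | h2 <;> linarith
  have hnegA : 1 - pA - qA < 0 := by
    have h := soppside_coeff_neg B C A IA A ((1-pA-qA)/⟪C-B,C-B⟫) ((1-(0:ℝ)-0)/⟪C-B,C-B⟫)
      hwBCne (decBC IA pA qA hdA) (decBC A 0 0 (by simp))
      (by rw [hddBC]; norm_num; positivity) hIA0
    have := (div_lt_iff₀ hddBCpos).mp h
    linarith
  have kA1 := keyBC IA pA qA hdA
  have kA2 := keyCA IA pA qA hdA
  have kA3 := keyAB IA pA qA hdA
  have eA1 : |1-pA-qA| * b = |pA| * a := by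
    apply mul_right_cancel₀ hDpos.ne'
    linear_combination (-b) * kA1 + a * kA2 + (a*b) * hIA1
  have eA2 : |pA| * c = |qA| * b := by
    apply mul_right_cancel₀ hDpos.ne'
    linear_combination (-c) * kA2 + b * kA3 + (b*c) * hIA2
  obtain ⟨hαvA, hβvA, hγvA⟩ := bary_neg_solve a b c (1-pA-qA) pA qA hapos hbpos hcpos
    hta htb htc (by ring)
    (by linear_combination c * eA1) (by linear_combination a * eA2) hnegA
  have hIA' : IA = A + (b/(b+c-a)) • (B-A) + (c/(b+c-a)) • (C-A) := by
    rw [hdA, hβvA, hγvA]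
  -- excenter opposite B
  obtain ⟨pB, qB, hdB⟩ := hspan IB
  have hwCAne : (⟪A-C,A-C⟫ • (B-C) - ⟪B-C,A-C⟫ • (A-C)) ≠ 0 := by
    intro h
    have h2 := norm_w_sq (A-C) (B-C)
    rw [h, norm_zero, hgramCA, hddCA] at h2
    have : (0:ℝ) < b^2 * D2 := by positivity
    norm_num at h2
    rcases h2 with h2 | h2 <;> linarith
  have hnegB : pB < 0 := by
    have h := soppside_coeff_neg C A B IB B (pB/⟪A-C,A-C⟫) ((1:ℝ)/⟪A-C,A-C⟫)
      hwCAne (decCA IB pB qB hdB) (decCA B 1 0 (by module))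
      (by rw [hddCA]; positivity) hIB0
    have := (div_lt_iff₀ hddCApos).mp h
    linarith
  have kB1 := keyBC IB pB qB hdB
  have kB2 := keyCA IB pB qB hdB
  have kB3 := keyAB IB pB qB hdB
  have eB1 : |1-pB-qB| * b = |pB| * a := by
    apply mul_right_cancel₀ hDpos.ne'
    linear_combination (-b) * kB1 + a * kB2 + (a*b) * hIB1
  have eB2 : |pB| * c = |qB| * b := by
    apply mul_right_cancel₀ hDpos.ne'
    linear_combination (-c) * kB2 + b * kB3 + (b*c) * hIB2
  obtain ⟨hβnegB, hαvB, hγvB⟩ := bary_neg_solve b a c pB (1-pB-qB) qB hbpos hapos hcpos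
    (by linarith) (by linarith) (by linarith) (by ring)
    (by linear_combination (-c) * eB1) (by linear_combination c * eB1 + a * eB2) hnegB
  have hIB' : IB = A + (-(b/(a+c-b))) • (B-A) + (c/(a+c-b)) • (C-A) := by
    rw [hdB, hβnegB, hγvB]
  -- excenter opposite C
  obtain ⟨pC, qC, hdC⟩ := hspan IC
  have hwABne : (⟪B-A,B-A⟫ • (C-A) - ⟪C-A,B-A⟫ • (B-A)) ≠ 0 := by
    intro h
    have h2 := norm_w_sq (B-A) (C-A)
    rw [h, norm_zero, hgramAB, hddAB] at h2
    have : (0:ℝ) < c^2 * D2 := by positivity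
    norm_num at h2
    rcases h2 with h2 | h2 <;> linarith
  have hnegC : qC < 0 := by
    have h := soppside_coeff_neg A B C IC C (qC/⟪B-A,B-A⟫) ((1:ℝ)/⟪B-A,B-A⟫)
      hwABne (decAB IC pC qC hdC) (decAB C 0 1 (by module))
      (by rw [hddAB]; positivity) hIC0
    have := (div_lt_iff₀ hddABpos).mp h
    linarith
  have kC1 := keyBC IC pC qC hdC
  have kC2 := keyCA IC pC qC hdC
  have kC3 := keyAB IC pC qC hdC
  have eC1 : |1-pC-qC| * b = |pC| * a := by
    apply mul_right_cancel₀ hDpos.ne'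
    linear_combination (-b) * kC1 + a * kC2 + (a*b) * hIC1
  have eC2 : |pC| * c = |qC| * b := by
    apply mul_right_cancel₀ hDpos.ne'
    linear_combination (-c) * kC2 + b * kC3 + (b*c) * hIC2
  obtain ⟨hγnegC, hαvC, hβvC⟩ := bary_neg_solve c a b qC (1-pC-qC) pC hcpos hapos hbpos
    (by linarith) (by linarith) (by linarith) (by ring)
    (by linear_combination (-a) * eC2 + (-c) * eC1) (by linear_combination c * eC1) hnegC
  have hIC' : IC = A + (b/(a+b-c)) • (B-A) + (-(c/(a+b-c))) • (C-A) := by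
    rw [hdC, hβvC, hγnegC]
  -- the circumcenter conditions
  have hO1' : ⟪O - A, B - A⟫ = c^2/2 := by
    have h1 : ‖O - A‖ = ‖O - B‖ := by rw [← dist_eq_norm, ← dist_eq_norm]; exact hO1
    have h2 : ‖O - B‖^2 = ‖O-A‖^2 - 2*⟪O-A, B-A⟫ + ‖B-A‖^2 := by
      rw [show (O:EuclideanSpace ℝ (Fin 2)) - B = (O-A) - (B-A) from by abel]
      exact norm_sub_sq_real _ _
    rw [← h1, ← hc_def] at h2
    linarith
  have hO2' : ⟪O - A, C - A⟫ = b^2/2 := by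
    have h1 : ‖O - A‖ = ‖O - C‖ := by
      rw [← dist_eq_norm, ← dist_eq_norm]; exact hO1.trans hO2
    have h2 : ‖O - C‖^2 = ‖O-A‖^2 - 2*⟪O-A, C-A⟫ + ‖C-A‖^2 := by
      rw [show (O:EuclideanSpace ℝ (Fin 2)) - C = (O-A) - (C-A) from by abel]
      exact norm_sub_sq_real _ _
    rw [← h1, ← hb_def] at h2
    linarith
  -- the centroid of the four centers
  have hXA : (4⁻¹:ℝ) • (I + IA + IB + IC) - A
      = (4⁻¹*(b/(a+b+c) + b/(b+c-a) - b/(a+c-b) + b/(a+b-c))) • (B-A)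
        + (4⁻¹*(c/(a+b+c) + c/(b+c-a) + c/(a+c-b) - c/(a+b-c))) • (C-A) := by
    rw [hI', hIA', hIB', hIC']
    module
  have hcbA : ⟪C-A, B-A⟫ = (c^2 + b^2 - a^2)/2 := by
    have h2 : a^2 = ‖C-A‖^2 - 2*⟪C-A,B-A⟫ + ‖B-A‖^2 := by
      rw [ha_def, show (C:EuclideanSpace ℝ (Fin 2)) - B = (C-A) - (B-A) from by abel]
      exact norm_sub_sq_real _ _
    rw [← hb_def, ← hc_def] at h2
    linarith
  have hbcA : ⟪B-A, C-A⟫ = (c^2 + b^2 - a^2)/2 := by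
    rw [real_inner_comm]; exact hcbA
  have hs1 : (0:ℝ) < a+b+c := by linarith
  have hsA : (0:ℝ) < b+c-a := by linarith
  have hsB : (0:ℝ) < a+c-b := by linarith
  have hsC : (0:ℝ) < a+b-c := by linarith
  have hXu : ⟪(4⁻¹:ℝ) • (I + IA + IB + IC) - A, B - A⟫ = c^2/2 := by
    rw [hXA, inner_add_left, real_inner_smul_left, real_inner_smul_left, hddAB, hcbA]
    field_simp
    ring
  have hXv : ⟪(4⁻¹:ℝ) • (I + IA + IB + IC) - A, C - A⟫ = b^2/2 := by
    rw [hXA, inner_add_left, real_inner_smul_left, real_inner_smul_left, hbcA, hvv]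
    field_simp
    ring
  -- conclusion
  have hdu : ⟪O - (4⁻¹:ℝ) • (I + IA + IB + IC), B - A⟫ = 0 := by
    rw [show O - (4⁻¹:ℝ) • (I + IA + IB + IC)
        = (O - A) - ((4⁻¹:ℝ) • (I + IA + IB + IC) - A) from by abel, inner_sub_left,
      hO1', hXu]
    ring
  have hdv : ⟪O - (4⁻¹:ℝ) • (I + IA + IB + IC), C - A⟫ = 0 := by
    rw [show O - (4⁻¹:ℝ) • (I + IA + IB + IC)
        = (O - A) - ((4⁻¹:ℝ) • (I + IA + IB + IC) - A) from by abel, inner_sub_left,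
      hO2', hXv]
    ring
  obtain ⟨p, q, hpq⟩ := hspan (O - (4⁻¹:ℝ) • (I + IA + IB + IC) + A)
  have hOX : O - (4⁻¹:ℝ) • (I + IA + IB + IC) = p • (B-A) + q • (C-A) := by
    calc O - (4⁻¹:ℝ) • (I + IA + IB + IC)
        = (O - (4⁻¹:ℝ) • (I + IA + IB + IC) + A) - A := by abel
      _ = (A + p • (B-A) + q • (C-A)) - A := by rw [← hpq]
      _ = p • (B-A) + q • (C-A) := by abel
  have hz : ⟪O - (4⁻¹:ℝ) • (I + IA + IB + IC), O - (4⁻¹:ℝ) • (I + IA + IB + IC)⟫ = 0 := by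
    nth_rewrite 2 [hOX]
    rw [inner_add_right, real_inner_smul_right, real_inner_smul_right, hdu, hdv]
    ring
  have hz2 : O - (4⁻¹:ℝ) • (I + IA + IB + IC) = 0 := by rwa [inner_self_eq_zero] at hz
  exact sub_eq_zero.mp hz2
end

section
/- Let A, B, C ∈ ℝ² be affinely independent with incenter I, and let v ∈ ℝ² be a nonzero vector. Let ℓ_A, ℓ_B, ℓ_C be the lines through A, B, C respectively with direction v (three parallel lines), and let m_A, m_B, m_C be the images of ℓ_A, ℓ_B, ℓ_C under the reflections of ℝ² across the lines AI, BI, CI respectively (the internal angle bisectors). Then the three lines m_A, m_B, m_C have a common point. -/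
noncomputable section

namespace RPCaux

abbrev E2 := EuclideanSpace ℝ (Fin 2)

def mk2 (x y : ℝ) : E2 := WithLp.toLp 2 ![x, y]
@[simp] lemma mk2_zero (x y : ℝ) : mk2 x y 0 = x := rfl
@[simp] lemma mk2_one (x y : ℝ) : mk2 x y 1 = y := rfl

lemma ext2 {x y : E2} (h0 : x 0 = y 0) (h1 : x 1 = y 1) : x = y := by
  apply PiLp.ext; intro i; fin_cases i <;> assumption

lemma inner2 (x y : E2) : (inner ℝ x y : ℝ) = x 0 * y 0 + x 1 * y 1 := by
  simp [PiLp.inner_apply, Fin.sum_univ_two, mul_comm]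

@[simp] lemma sub_apply2 (x y : E2) (i : Fin 2) : (x - y) i = x i - y i := rfl
@[simp] lemma add_apply2 (x y : E2) (i : Fin 2) : (x + y) i = x i + y i := rfl
@[simp] lemma smul_apply2 (t : ℝ) (x : E2) (i : Fin 2) : (t • x) i = t * x i := rfl
@[simp] lemma neg_apply2 (x : E2) (i : Fin 2) : (-x) i = -(x i) := rfl
@[simp] lemma zero_apply2 (i : Fin 2) : (0 : E2) i = 0 := rfl

lemma inner_self_ne {d : E2} (hd : d ≠ 0) : (inner ℝ d d : ℝ) ≠ 0 :=
  inner_self_ne_zero.2 hd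

lemma inner_self_ne' {d : E2} (hd : d ≠ 0) : d 0 * d 0 + d 1 * d 1 ≠ 0 := by
  have := inner_self_ne hd
  rwa [inner2] at this

/-- complex multiplication on `ℝ²` -/
def cm (x y : E2) : E2 := mk2 (x 0 * y 0 - x 1 * y 1) (x 0 * y 1 + x 1 * y 0)
/-- complex conjugation on `ℝ²` -/
def cj (x : E2) : E2 := mk2 (x 0) (-(x 1))
/-- the `2 × 2` determinant (cross product) -/
def cross (x y : E2) : ℝ := x 0 * y 1 - x 1 * y 0

lemma cm_smul_left (t : ℝ) (x y : E2) : cm (t • x) y = t • cm x y := by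
  apply ext2 <;> simp [cm] <;> ring

/-- reflection of the vector `z` across the line `ℝ ∙ u` -/
def Rv (u z : E2) : E2 := (2 * (inner ℝ z u : ℝ) / (inner ℝ u u : ℝ)) • u - z

lemma Rv_smul_u {u : E2} (l : ℝ) (hl : l ≠ 0) (hu : u ≠ 0) (z : E2) :
    Rv (l • u) z = Rv u z := by
  have huu := inner_self_ne hu
  have key : ∀ X Y : ℝ, Y ≠ 0 → 2 * (l * X) / (l * (l * Y)) * l = 2 * X / Y := by
    intro X Y hY
    field_simp
  unfold Rv
  rw [real_inner_smul_right, real_inner_smul_left, real_inner_smul_right, smul_smul,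
    key _ _ huu]

/-- generic identity: `(2⟪z,u⟫)u - ⟪u,u⟫z = u² z̄` -/
lemma gen_id (u z : E2) :
    (2 * (inner ℝ z u : ℝ)) • u - (inner ℝ u u : ℝ) • z = cm (cm u u) (cj z) := by
  rw [inner2, inner2]; apply ext2 <;> simp [cm, cj] <;> ring

lemma sq_id (P Q : E2) (b c : ℝ) (hb : b ^ 2 = (inner ℝ Q Q : ℝ)) (hc : c ^ 2 = (inner ℝ P P : ℝ)) :
    cm (b • P + c • Q) (b • P + c • Q) = (2 * (b * c + (inner ℝ P Q : ℝ))) • cm P Q := by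
  rw [inner2] at hb hc
  apply ext2
  · simp [cm, inner2]
    linear_combination (P 0 ^ 2 - P 1 ^ 2) * hb + (Q 0 ^ 2 - Q 1 ^ 2) * hc
  · simp [cm, inner2]
    linear_combination (2 * P 0 * P 1) * hb + (2 * Q 0 * Q 1) * hc

lemma uu_id (P Q : E2) (b c : ℝ) (hb : b ^ 2 = (inner ℝ Q Q : ℝ)) (hc : c ^ 2 = (inner ℝ P P : ℝ)) :
    (inner ℝ (b • P + c • Q) (b • P + c • Q) : ℝ)
      = 2 * b * c * (b * c + (inner ℝ P Q : ℝ)) := by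
  rw [inner2] at hb hc ⊢
  rw [inner2]
  simp only [add_apply2, smul_apply2]
  linear_combination (-(c ^ 2)) * hb + (-(b ^ 2)) * hc

lemma Rv_eq (P Q v : E2) (b c : ℝ) (hb0 : b ≠ 0) (hc0 : c ≠ 0)
    (hb : b ^ 2 = (inner ℝ Q Q : ℝ)) (hc : c ^ 2 = (inner ℝ P P : ℝ))
    (hu : b • P + c • Q ≠ 0) :
    Rv (b • P + c • Q) v = (1 / (b * c)) • cm (cm P Q) (cj v) := by
  set u : E2 := b • P + c • Q with hudef
  set Y : ℝ := (inner ℝ u u : ℝ) with hY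
  have hYne : Y ≠ 0 := inner_self_ne hu
  set D : ℝ := b * c + (inner ℝ P Q : ℝ) with hD
  have e2 : Y = 2 * b * c * D := uu_id P Q b c hb hc
  have hDne : D ≠ 0 := by
    intro h
    rw [h, mul_zero] at e2
    exact hYne e2
  have e1 : (2 * (inner ℝ v u : ℝ)) • u - Y • v = (2 * D) • cm (cm P Q) (cj v) := by
    rw [gen_id u v, sq_id P Q b c hb hc, cm_smul_left]
  have e3 : Rv u v = (1 / Y) • ((2 * (inner ℝ v u : ℝ)) • u - Y • v) := by
    unfold Rv
    rw [smul_sub, smul_smul, smul_smul, one_div, inv_mul_cancel₀ hYne, one_smul,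
      inv_mul_eq_div]
  rw [e3, e1, smul_smul]
  congr 1
  rw [e2]
  field_simp

lemma crossAB (P Q w : E2) :
    cross (cm (cm P Q) w) (cm (cm (-P) (Q - P)) w)
      = -((w 0 ^ 2 + w 1 ^ 2) * (P 0 ^ 2 + P 1 ^ 2) * (P 0 * Q 1 - P 1 * Q 0)) := by
  simp [cross, cm]; ring

lemma crossCA (P Q w : E2) :
    cross (cm (cm (-Q) (P - Q)) w) (cm (cm P Q) w)
      = -((w 0 ^ 2 + w 1 ^ 2) * (Q 0 ^ 2 + Q 1 ^ 2) * (P 0 * Q 1 - P 1 * Q 0)) := by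
  simp [cross, cm]; ring

lemma concur1 (P Q w : E2) :
    (cross P (cm (cm (-P) (Q - P)) w)) • cm (cm P Q) w
        - (cross (cm (cm P Q) w) (cm (cm (-P) (Q - P)) w)) • P
      = (-(cross (-P) (cm (cm P Q) w))) • cm (cm (-P) (Q - P)) w := by
  apply ext2 <;>
    (simp only [cross, cm, mk2_zero, mk2_one, sub_apply2, smul_apply2, neg_apply2]; ring)

lemma concur2 (P Q w : E2) :
    (cross (cm (cm (-Q) (P - Q)) w) (cm (cm P Q) w)) •
        ((cross P (cm (cm (-P) (Q - P)) w)) • cm (cm P Q) w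
          - (cross (cm (cm P Q) w) (cm (cm (-P) (Q - P)) w)) • Q)
      = ((cross (cm (cm P Q) w) (cm (cm (-P) (Q - P)) w)) * (cross (-Q) (cm (cm P Q) w))) •
          cm (cm (-Q) (P - Q)) w := by
  apply ext2 <;>
    (simp only [cross, cm, mk2_zero, mk2_one, sub_apply2, smul_apply2, neg_apply2]; ring)

lemma concur1' (P Q w : E2)
    (hd : cross (cm (cm P Q) w) (cm (cm (-P) (Q - P)) w) ≠ 0) :
    ((cross (cm (cm P Q) w) (cm (cm (-P) (Q - P)) w))⁻¹ * cross P (cm (cm (-P) (Q - P)) w))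
        • cm (cm P Q) w - P
      = ((cross (cm (cm P Q) w) (cm (cm (-P) (Q - P)) w))⁻¹ * (-(cross (-P) (cm (cm P Q) w))))
        • cm (cm (-P) (Q - P)) w := by
  have h2 := congrArg
    (fun y : E2 => (cross (cm (cm P Q) w) (cm (cm (-P) (Q - P)) w))⁻¹ • y) (concur1 P Q w)
  simp only [smul_sub, smul_smul] at h2
  rwa [inv_mul_cancel₀ hd, one_smul] at h2

lemma concur2' (P Q w : E2)
    (hd : cross (cm (cm P Q) w) (cm (cm (-P) (Q - P)) w) ≠ 0)
    (hd2 : cross (cm (cm (-Q) (P - Q)) w) (cm (cm P Q) w) ≠ 0) :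
    ((cross (cm (cm P Q) w) (cm (cm (-P) (Q - P)) w))⁻¹ * cross P (cm (cm (-P) (Q - P)) w))
        • cm (cm P Q) w - Q
      = ((cross (cm (cm (-Q) (P - Q)) w) (cm (cm P Q) w))⁻¹ * cross (-Q) (cm (cm P Q) w))
        • cm (cm (-Q) (P - Q)) w := by
  set d1 : ℝ := cross (cm (cm P Q) w) (cm (cm (-P) (Q - P)) w) with hd1
  set d2 : ℝ := cross (cm (cm (-Q) (P - Q)) w) (cm (cm P Q) w) with hd2'
  have h2 := congrArg (fun y : E2 => ((d1 * d2)⁻¹) • y) (concur2 P Q w)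
  simp only [smul_sub, smul_smul] at h2
  rw [← hd1, ← hd2'] at h2
  have s1 : (d1 * d2)⁻¹ * (d2 * cross P (cm (cm (-P) (Q - P)) w))
      = d1⁻¹ * cross P (cm (cm (-P) (Q - P)) w) := by
    field_simp
  have s2 : (d1 * d2)⁻¹ * (d2 * d1) = 1 := by
    rw [mul_comm d2 d1]
    exact inv_mul_cancel₀ (mul_ne_zero hd hd2)
  have s3 : (d1 * d2)⁻¹ * (d1 * cross (-Q) (cm (cm P Q) w))
      = d2⁻¹ * cross (-Q) (cm (cm P Q) w) := by
    field_simp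
  rw [s1, s2, s3, one_smul] at h2
  exact h2

lemma collin_coord {p0 p1 q0 q1 : ℝ} (hden : p0 * p0 + p1 * p1 ≠ 0)
    (hc : p0 * q1 - p1 * q0 = 0) :
    q0 = ((q0 * p0 + q1 * p1) / (p0 * p0 + p1 * p1)) * p0 ∧
      q1 = ((q0 * p0 + q1 * p1) / (p0 * p0 + p1 * p1)) * p1 := by
  constructor
  · rw [div_mul_eq_mul_div, eq_div_iff hden]
    linear_combination (-p1) * hc
  · rw [div_mul_eq_mul_div, eq_div_iff hden]
    linear_combination p0 * hc

lemma cross_ne_of_affineIndependent {A B C : E2} (h : AffineIndependent ℝ ![A, B, C]) :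
    (B - A) 0 * (C - A) 1 - (B - A) 1 * (C - A) 0 ≠ 0 := by
  intro hc
  rw [affineIndependent_iff_not_collinear_set] at h
  apply h
  rw [collinear_iff_exists_forall_eq_smul_vadd]
  by_cases hBA : B - A = 0
  · have hBA' : B = A := by rwa [sub_eq_zero] at hBA
    refine ⟨A, C - A, ?_⟩
    intro p hp
    rcases hp with h1 | h1 | h1 <;> rw [h1]
    · exact ⟨0, by simp⟩
    · exact ⟨0, by simp [hBA']⟩
    · exact ⟨1, by simp⟩
  · have hden := inner_self_ne' hBA
    have hcc := collin_coord hden hc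
    have hC : C - A = (((C - A) 0 * (B - A) 0 + (C - A) 1 * (B - A) 1) /
        ((B - A) 0 * (B - A) 0 + (B - A) 1 * (B - A) 1)) • (B - A) := by
      apply ext2
      · exact hcc.1
      · exact hcc.2
    refine ⟨A, B - A, ?_⟩
    intro p hp
    rcases hp with h1 | h1 | h1 <;> rw [h1]
    · exact ⟨0, by simp⟩
    · exact ⟨1, by simp⟩
    · refine ⟨((C - A) 0 * (B - A) 0 + (C - A) 1 * (B - A) 1) /
          ((B - A) 0 * (B - A) 0 + (B - A) 1 * (B - A) 1), ?_⟩
      rw [← hC]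
      simp

lemma refl_line (Ap Ip : E2) (hu : Ip - Ap ≠ 0) (z : E2) :
    EuclideanGeometry.reflection (line[ℝ, Ap, Ip]) (Ap + z)
      = Ap + ((2 * (inner ℝ z (Ip - Ap) : ℝ) / (inner ℝ (Ip - Ap) (Ip - Ap) : ℝ)) • (Ip - Ap) - z) := by
  set u : E2 := Ip - Ap with hudef
  have huu : (inner ℝ u u : ℝ) ≠ 0 := by
    simpa using (inner_self_ne_zero (𝕜 := ℝ)).2 hu
  set t : ℝ := (inner ℝ z u : ℝ) / (inner ℝ u u : ℝ) with ht
  set s := line[ℝ, Ap, Ip] with hs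
  have hdir : s.direction = ℝ ∙ u := by
    rw [hs, direction_affineSpan, vectorSpan_pair_rev]
    simp [hudef]
  have hF : Ap + t • u ∈ s := by
    have := smul_vsub_vadd_mem_affineSpan_pair (k := ℝ) t Ap Ip
    simpa [vsub_eq_sub, vadd_eq_add, add_comm] using this
  have hFo : Ap + t • u ∈ AffineSubspace.mk' (Ap + z) s.directionᗮ := by
    rw [AffineSubspace.mem_mk', hdir]
    rw [Submodule.mem_orthogonal_singleton_iff_inner_right]
    have : (Ap + t • u) -ᵥ (Ap + z) = t • u - z := by
      rw [vsub_eq_sub]; abel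
    rw [this, inner_sub_right, real_inner_smul_right, ht,
      div_mul_cancel₀ _ huu, real_inner_comm u z, sub_self]
  have hproj : (EuclideanGeometry.orthogonalProjection s (Ap + z) : E2)
      = Ap + t • u := by
    have hmem : Ap + t • u ∈ (s : Set E2) ∩
        (AffineSubspace.mk' (Ap + z) s.directionᗮ : Set E2) := ⟨hF, hFo⟩
    rw [EuclideanGeometry.inter_eq_singleton_orthogonalProjection (Ap + z)] at hmem
    exact (Set.mem_singleton_iff.1 hmem).symm
  rw [EuclideanGeometry.reflection_apply', hproj, vsub_eq_sub, vadd_eq_add]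
  have : (2 : ℝ) * (inner ℝ z u : ℝ) / (inner ℝ u u : ℝ) = 2 * t := by
    rw [ht]; ring
  rw [this]
  module

lemma refl_smul (Ap Ip : E2) (hu : Ip - Ap ≠ 0) (sc : ℝ) (z : E2) :
    EuclideanGeometry.reflection (line[ℝ, Ap, Ip]) (Ap + sc • z)
      = Ap + sc • Rv (Ip - Ap) z := by
  rw [refl_line Ap Ip hu (sc • z)]
  congr 1
  set u : E2 := Ip - Ap with hudef
  have huu := inner_self_ne' hu
  apply ext2 <;>
    (simp only [Rv, inner2, sub_apply2, smul_apply2]; field_simp)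

lemma sq_sum_pos {x y : ℝ} (h : x ≠ 0 ∨ y ≠ 0) : 0 < x ^ 2 + y ^ 2 := by
  rcases h with h | h <;> nlinarith [sq_nonneg x, sq_nonneg y, mul_self_pos.2 h]

lemma ne_zero_coord {d : E2} (hd : d ≠ 0) : d 0 ≠ 0 ∨ d 1 ≠ 0 := by
  by_contra h
  push_neg at h
  exact hd (by apply PiLp.ext; intro i; fin_cases i <;> simp [h.1, h.2])

lemma norm_eq2 (x : E2) : ‖x‖ = Real.sqrt (x 0 ^ 2 + x 1 ^ 2) := by
  rw [EuclideanSpace.norm_eq, Fin.sum_univ_two]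
  simp [sq_abs]

lemma infDist_line (P Q R : E2) (hQR : Q ≠ R) :
    Metric.infDist P (line[ℝ, Q, R] : Set E2)
      = |cross (P - Q) (R - Q)| / dist Q R := by
  set d : E2 := R - Q with hddef
  set w : E2 := P - Q with hwdef
  have hd : d ≠ 0 := sub_ne_zero_of_ne (Ne.symm hQR)
  have hden : 0 < d 0 ^ 2 + d 1 ^ 2 := sq_sum_pos (ne_zero_coord hd)
  have hdist : dist Q R = Real.sqrt (d 0 ^ 2 + d 1 ^ 2) := by
    rw [dist_eq_norm, ← norm_neg, neg_sub, ← hddef, norm_eq2]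
  have hdistpos : 0 < dist Q R := dist_pos.2 hQR
  have hcr : cross (P - Q) (R - Q) = w 0 * d 1 - w 1 * d 0 := rfl
  set cr : ℝ := w 0 * d 1 - w 1 * d 0 with hcrdef
  set t₀ : ℝ := (w 0 * d 0 + w 1 * d 1) / (d 0 ^ 2 + d 1 ^ 2) with ht₀
  have hFmem : Q + t₀ • d ∈ (line[ℝ, Q, R] : Set E2) := by
    simpa [vsub_eq_sub, vadd_eq_add, hddef, add_comm] using
      smul_vsub_vadd_mem_affineSpan_pair (k := ℝ) t₀ Q R
  have hPF : dist P (Q + t₀ • d) = |cr| / dist Q R := by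
    rw [dist_eq_norm, norm_eq2, hdist]
    have h0 : (P - (Q + t₀ • d)) 0 = w 0 - t₀ * d 0 := by
      simp [hwdef]; ring
    have h1 : (P - (Q + t₀ • d)) 1 = w 1 - t₀ * d 1 := by
      simp [hwdef]; ring
    rw [h0, h1, ← Real.sqrt_sq_eq_abs, ← Real.sqrt_div (sq_nonneg cr)]
    congr 1
    rw [ht₀]
    field_simp
    ring
  have hlb : ∀ y ∈ (line[ℝ, Q, R] : Set E2),
      |cr| / dist Q R ≤ dist P y := by
    intro y hy
    have hyd : y -ᵥ Q ∈ (line[ℝ, Q, R]).direction :=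
      AffineSubspace.vsub_mem_direction hy (left_mem_affineSpan_pair ℝ Q R)
    rw [direction_affineSpan, vectorSpan_pair_rev, Submodule.mem_span_singleton] at hyd
    obtain ⟨t, ht⟩ := hyd
    have hy' : P - y = w - t • d := by
      rw [hwdef, hddef]
      have h5 : t • (R -ᵥ Q) = y - Q := ht
      rw [vsub_eq_sub] at h5
      rw [h5]
      abel
    have e0 : (w - t • d) 0 = w 0 - t * d 0 := by simp
    have e1 : (w - t • d) 1 = w 1 - t * d 1 := by simp
    rw [dist_eq_norm P y, hy', norm_eq2, e0, e1, div_le_iff₀ hdistpos, hdist,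
      ← Real.sqrt_mul (by positivity), ← Real.sqrt_sq_eq_abs]
    apply Real.sqrt_le_sqrt
    rw [hcrdef]
    nlinarith [sq_nonneg ((w 0 - t * d 0) * d 0 + (w 1 - t * d 1) * d 1)]
  apply le_antisymm
  · exact (Metric.infDist_le_dist_of_mem hFmem).trans (le_of_eq hPF)
  · refine le_of_not_gt fun hlt => ?_
    obtain ⟨y, hy, hdy⟩ :=
      (Metric.infDist_lt_iff ⟨Q, left_mem_affineSpan_pair ℝ Q R⟩).1 hlt
    exact absurd hdy (not_lt.2 (hlb y hy))

end RPCaux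

open RPCaux in
/-- If through the vertices of a triangle three parallel lines (with common direction `v`)
are drawn and each of them is reflected across the internal bisector of the angle at the
corresponding vertex (the line joining the vertex to the incenter `I`), then the three
reflected lines are concurrent. -/
theorem reflected_parallels_concurrent
    (A B C I : EuclideanSpace ℝ (Fin 2))
    (v : EuclideanSpace ℝ (Fin 2)) (hv : v ≠ 0)
    (hABC : AffineIndependent ℝ ![A, B, C])
    -- `I` is the incenter: an interior point equidistant from the three side lines
    (hIint : ∃ α β γ : ℝ, 0 < α ∧ 0 < β ∧ 0 < γ ∧ α + β + γ = 1 ∧ I = α • A + β • B + γ • C)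
    (hI1 : Metric.infDist I (line[ℝ, B, C] : Set (EuclideanSpace ℝ (Fin 2))) =
           Metric.infDist I (line[ℝ, C, A] : Set (EuclideanSpace ℝ (Fin 2))))
    (hI2 : Metric.infDist I (line[ℝ, C, A] : Set (EuclideanSpace ℝ (Fin 2))) =
           Metric.infDist I (line[ℝ, A, B] : Set (EuclideanSpace ℝ (Fin 2)))) :
    ∃ X : EuclideanSpace ℝ (Fin 2),
      X ∈ EuclideanGeometry.reflection (line[ℝ, A, I]) ''
            {P : EuclideanSpace ℝ (Fin 2) | ∃ t : ℝ, P = A + t • v} ∧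
      X ∈ EuclideanGeometry.reflection (line[ℝ, B, I]) ''
            {P : EuclideanSpace ℝ (Fin 2) | ∃ t : ℝ, P = B + t • v} ∧
      X ∈ EuclideanGeometry.reflection (line[ℝ, C, I]) ''
            {P : EuclideanSpace ℝ (Fin 2) | ∃ t : ℝ, P = C + t • v} := by
  obtain ⟨α, β, γ, hα, hβ, hγ, hsum, hIdef⟩ := hIint
  have hK0 : (B - A) 0 * (C - A) 1 - (B - A) 1 * (C - A) 0 ≠ 0 :=
    cross_ne_of_affineIndependent hABC
  have hAB : A ≠ B := by intro h; apply hK0; rw [h]; simp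
  have hBC : B ≠ C := by intro h; apply hK0; rw [h]; ring
  have hCA : C ≠ A := by intro h; apply hK0; rw [h]; simp
  -- rewrite the incenter distance conditions
  rw [infDist_line I B C hBC, infDist_line I C A hCA] at hI1
  rw [infDist_line I C A hCA, infDist_line I A B hAB] at hI2
  set a : ℝ := dist B C with ha'
  set b : ℝ := dist C A with hb'
  set c : ℝ := dist A B with hc'
  have ha : 0 < a := dist_pos.2 hBC
  have hbpos : 0 < b := dist_pos.2 hCA
  have hcpos : 0 < c := dist_pos.2 hAB
  have ha2 : a ^ 2 = (inner ℝ (C - B) (C - B) : ℝ) := by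
    rw [ha', dist_eq_norm']
    exact (real_inner_self_eq_norm_sq _).symm
  have hb2 : b ^ 2 = (inner ℝ (C - A) (C - A) : ℝ) := by
    rw [hb', dist_eq_norm]
    exact (real_inner_self_eq_norm_sq _).symm
  have hc2 : c ^ 2 = (inner ℝ (B - A) (B - A) : ℝ) := by
    rw [hc', dist_eq_norm']
    exact (real_inner_self_eq_norm_sq _).symm
  have hc2n : c ^ 2 = (inner ℝ (A - B) (A - B) : ℝ) := by
    rw [hc2, inner2, inner2]; simp only [sub_apply2]; ring
  have hb2n : b ^ 2 = (inner ℝ (A - C) (A - C) : ℝ) := by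
    rw [hb2, inner2, inner2]; simp only [sub_apply2]; ring
  have ha2n : a ^ 2 = (inner ℝ (B - C) (B - C) : ℝ) := by
    rw [ha2, inner2, inner2]; simp only [sub_apply2]; ring
  -- the three signed distances
  have e1 : cross (I - B) (C - B)
      = -(α * ((B - A) 0 * (C - A) 1 - (B - A) 1 * (C - A) 0)) := by
    rw [hIdef]
    simp only [cross, sub_apply2, add_apply2, smul_apply2]
    linear_combination (B 0 * (C 1 - B 1) - B 1 * (C 0 - B 0)) * hsum
  have e2 : cross (I - C) (A - C)
      = -(β * ((B - A) 0 * (C - A) 1 - (B - A) 1 * (C - A) 0)) := by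
    rw [hIdef]
    simp only [cross, sub_apply2, add_apply2, smul_apply2]
    linear_combination (C 0 * (A 1 - C 1) - C 1 * (A 0 - C 0)) * hsum
  have e3 : cross (I - A) (B - A)
      = -(γ * ((B - A) 0 * (C - A) 1 - (B - A) 1 * (C - A) 0)) := by
    rw [hIdef]
    simp only [cross, sub_apply2, add_apply2, smul_apply2]
    linear_combination (A 0 * (B 1 - A 1) - A 1 * (B 0 - A 0)) * hsum
  rw [e1, e2, abs_neg, abs_neg, abs_mul, abs_mul, abs_of_pos hα, abs_of_pos hβ] at hI1
  rw [e2, e3, abs_neg, abs_neg, abs_mul, abs_mul, abs_of_pos hβ, abs_of_pos hγ] at hI2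
  have hKabs : |(B - A) 0 * (C - A) 1 - (B - A) 1 * (C - A) 0| ≠ 0 := abs_ne_zero.2 hK0
  rw [div_eq_div_iff ha.ne' hbpos.ne'] at hI1
  rw [div_eq_div_iff hbpos.ne' hcpos.ne'] at hI2
  have hab : α * b = β * a := by
    have h2 : (α * b) * |(B - A) 0 * (C - A) 1 - (B - A) 1 * (C - A) 0|
        = (β * a) * |(B - A) 0 * (C - A) 1 - (B - A) 1 * (C - A) 0| := by
      linear_combination hI1
    exact mul_right_cancel₀ hKabs h2
  have hbc : β * c = γ * b := by
    have h2 : (β * c) * |(B - A) 0 * (C - A) 1 - (B - A) 1 * (C - A) 0|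
        = (γ * b) * |(B - A) 0 * (C - A) 1 - (B - A) 1 * (C - A) 0| := by
      linear_combination hI2
    exact mul_right_cancel₀ hKabs h2
  set l : ℝ := α / a with hl'
  have hl : l ≠ 0 := div_ne_zero hα.ne' ha.ne'
  have hβl : β = l * b := by
    rw [hl']
    field_simp
    linear_combination -hab
  have hγl : γ = l * c := by
    rw [hl']
    field_simp
    have h2 : (γ * a) * b = (α * c) * b := by
      linear_combination (-c) * hab + (-a) * hbc
    have h3 : γ * a = α * c := mul_right_cancel₀ hbpos.ne' h2
    linear_combination h3
  have hαl : α = l * a := by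
    rw [hl']
    field_simp
  -- the direction of each bisector
  have hIA : I - A = l • ((b • (B - A)) + (c • (C - A))) := by
    rw [hIdef]
    apply ext2
    · simp only [sub_apply2, add_apply2, smul_apply2]
      linear_combination A 0 * hsum + (B 0 - A 0) * hβl + (C 0 - A 0) * hγl
    · simp only [sub_apply2, add_apply2, smul_apply2]
      linear_combination A 1 * hsum + (B 1 - A 1) * hβl + (C 1 - A 1) * hγl
  have hIB : I - B = l • ((a • (A - B)) + (c • (C - B))) := by
    rw [hIdef]
    apply ext2
    · simp only [sub_apply2, add_apply2, smul_apply2]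
      linear_combination B 0 * hsum + (A 0 - B 0) * hαl + (C 0 - B 0) * hγl
    · simp only [sub_apply2, add_apply2, smul_apply2]
      linear_combination B 1 * hsum + (A 1 - B 1) * hαl + (C 1 - B 1) * hγl
  have hIC : I - C = l • ((a • (A - C)) + (b • (B - C))) := by
    rw [hIdef]
    apply ext2
    · simp only [sub_apply2, add_apply2, smul_apply2]
      linear_combination C 0 * hsum + (A 0 - C 0) * hαl + (B 0 - C 0) * hβl
    · simp only [sub_apply2, add_apply2, smul_apply2]
      linear_combination C 1 * hsum + (A 1 - C 1) * hαl + (B 1 - C 1) * hβl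
  have hIAne : I - A ≠ 0 := by
    intro h
    have h6 : -(γ * ((B - A) 0 * (C - A) 1 - (B - A) 1 * (C - A) 0)) = 0 := by
      rw [← e3, h]; simp [cross]
    have h7 : γ * ((B - A) 0 * (C - A) 1 - (B - A) 1 * (C - A) 0) = 0 := by linarith
    rcases mul_eq_zero.1 h7 with h8 | h8
    · exact hγ.ne' h8
    · exact hK0 h8
  have hIBne : I - B ≠ 0 := by
    intro h
    have h6 : -(α * ((B - A) 0 * (C - A) 1 - (B - A) 1 * (C - A) 0)) = 0 := by
      rw [← e1, h]; simp [cross]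
    have h7 : α * ((B - A) 0 * (C - A) 1 - (B - A) 1 * (C - A) 0) = 0 := by linarith
    rcases mul_eq_zero.1 h7 with h8 | h8
    · exact hα.ne' h8
    · exact hK0 h8
  have hICne : I - C ≠ 0 := by
    intro h
    have h6 : -(β * ((B - A) 0 * (C - A) 1 - (B - A) 1 * (C - A) 0)) = 0 := by
      rw [← e2, h]; simp [cross]
    have h7 : β * ((B - A) 0 * (C - A) 1 - (B - A) 1 * (C - A) 0) = 0 := by linarith
    rcases mul_eq_zero.1 h7 with h8 | h8
    · exact hβ.ne' h8
    · exact hK0 h8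
  have huA_ : (b • (B - A)) + (c • (C - A)) ≠ 0 := by
    intro h; apply hIAne; rw [hIA, h, smul_zero]
  have huB_ : (a • (A - B)) + (c • (C - B)) ≠ 0 := by
    intro h; apply hIBne; rw [hIB, h, smul_zero]
  have huC_ : (a • (A - C)) + (b • (B - C)) ≠ 0 := by
    intro h; apply hICne; rw [hIC, h, smul_zero]
  -- the reflected directions
  have hRA : Rv (I - A) v = (1 / (b * c)) • cm (cm (B - A) (C - A)) (cj v) := by
    rw [hIA, Rv_smul_u l hl huA_,
      Rv_eq (B - A) (C - A) v b c hbpos.ne' hcpos.ne' hb2 hc2 huA_]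
  have hRB : Rv (I - B) v = (1 / (a * c)) • cm (cm (A - B) (C - B)) (cj v) := by
    rw [hIB, Rv_smul_u l hl huB_,
      Rv_eq (A - B) (C - B) v a c ha.ne' hcpos.ne' ha2 hc2n huB_]
  have hRC : Rv (I - C) v = (1 / (a * b)) • cm (cm (A - C) (B - C)) (cj v) := by
    rw [hIC, Rv_smul_u l hl huC_,
      Rv_eq (A - C) (B - C) v a b ha.ne' hbpos.ne' ha2n hb2n huC_]
  -- nondegeneracy of the reflected directions' cross products
  have hv' : v 0 * v 0 + v 1 * v 1 ≠ 0 := inner_self_ne' hv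
  have hw2 : (cj v) 0 ^ 2 + (cj v) 1 ^ 2 ≠ 0 := by
    simp only [cj, mk2_zero, mk2_one]
    intro h; apply hv'; linear_combination h
  have hP0 : B - A ≠ 0 := sub_ne_zero_of_ne (Ne.symm hAB)
  have hQ0 : C - A ≠ 0 := sub_ne_zero_of_ne hCA
  have hPP : (B - A) 0 ^ 2 + (B - A) 1 ^ 2 ≠ 0 := by
    have h5 := inner_self_ne' hP0; intro h; apply h5; linear_combination h
  have hQQ : (C - A) 0 ^ 2 + (C - A) 1 ^ 2 ≠ 0 := by
    have h5 := inner_self_ne' hQ0; intro h; apply h5; linear_combination h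
  have hdAB : cross (cm (cm (B - A) (C - A)) (cj v))
      (cm (cm (-(B - A)) ((C - A) - (B - A))) (cj v)) ≠ 0 := by
    rw [crossAB]
    exact neg_ne_zero.2 (mul_ne_zero (mul_ne_zero hw2 hPP) hK0)
  have hdCA : cross (cm (cm (-(C - A)) ((B - A) - (C - A))) (cj v))
      (cm (cm (B - A) (C - A)) (cj v)) ≠ 0 := by
    rw [crossCA]
    exact neg_ne_zero.2 (mul_ne_zero (mul_ne_zero hw2 hQQ) hK0)
  -- concurrency
  have h12 := concur1' (B - A) (C - A) (cj v) hdAB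
  have h13 := concur2' (B - A) (C - A) (cj v) hdAB hdCA
  have hMBeq : cm (cm (-(B - A)) ((C - A) - (B - A))) (cj v)
      = cm (cm (A - B) (C - B)) (cj v) := by
    rw [neg_sub, show ((C - A) - (B - A) : EuclideanSpace ℝ (Fin 2)) = C - B from by abel]
  have hMCeq : cm (cm (-(C - A)) ((B - A) - (C - A))) (cj v)
      = cm (cm (A - C) (B - C)) (cj v) := by
    rw [neg_sub, show ((B - A) - (C - A) : EuclideanSpace ℝ (Fin 2)) = B - C from by abel]
  rw [hMBeq] at h12
  rw [hMBeq, hMCeq] at h13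
  obtain ⟨t1, t2, t3, h12', h13'⟩ :
      ∃ t1 t2 t3 : ℝ,
        (t1 • cm (cm (B - A) (C - A)) (cj v) - (B - A)
          = t2 • cm (cm (A - B) (C - B)) (cj v)) ∧
        (t1 • cm (cm (B - A) (C - A)) (cj v) - (C - A)
          = t3 • cm (cm (A - C) (B - C)) (cj v)) :=
    ⟨_, _, _, h12, h13⟩
  refine ⟨A + t1 • cm (cm (B - A) (C - A)) (cj v), ?_, ?_, ?_⟩
  · refine ⟨A + ((b * c) * t1) • v, ⟨(b * c) * t1, rfl⟩, ?_⟩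
    rw [refl_smul A I hIAne ((b * c) * t1) v, hRA, smul_smul]
    have hs : (b * c) * t1 * (1 / (b * c)) = t1 := by
      field_simp
    rw [hs]
  · refine ⟨B + ((a * c) * t2) • v, ⟨(a * c) * t2, rfl⟩, ?_⟩
    rw [refl_smul B I hIBne ((a * c) * t2) v, hRB, smul_smul]
    have hs : (a * c) * t2 * (1 / (a * c)) = t2 := by
      field_simp
    rw [hs]
    have hsh : A + t1 • cm (cm (B - A) (C - A)) (cj v)
        = B + (t1 • cm (cm (B - A) (C - A)) (cj v) - (B - A)) := by
      module
    rw [hsh, h12']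
  · refine ⟨C + ((a * b) * t3) • v, ⟨(a * b) * t3, rfl⟩, ?_⟩
    rw [refl_smul C I hICne ((a * b) * t3) v, hRC, smul_smul]
    have hs : (a * b) * t3 * (1 / (a * b)) = t3 := by
      field_simp
    rw [hs]
    have hsh : A + t1 • cm (cm (B - A) (C - A)) (cj v)
        = C + (t1 • cm (cm (B - A) (C - A)) (cj v) - (C - A)) := by
      module
    rw [hsh, h13']

end
end
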